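/- arXiv:1304.7351 — 2 statements merged into one kernel-verified Lean document; each statement's English description precedes it below -/
import Mathlib

section
/- Let Ω ⊆ ℝⁿ be bounded, u : closure(Ω) → ℝ continuous, ε > 0, and u_ε the inf-convolution u_ε(x) = inf_{y ∈ closure(Ω)} { u(y) + ‖y−x‖²/(2ε) }. Let x₀ be an interior point of Ω, suppose (ζ, A) belongs to the second-order subjet J^{2,−}u_ε(x₀) (i.e., u_ε(x₀+ξ) ≥ u_ε(x₀) + ⟨ζ,ξ⟩ + (1/2)⟨Aξ,ξ⟩ + o(‖ξ‖²)), and suppose y₀ ∈ closure(Ω) attains the infimum defining u_ε(x₀). Then y₀ = x₀ − εζ. -/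
open Asymptotics RealInnerProductSpace Filter Topology

/-
Testing the inf-convolution at `x₀ + ξ` with the fixed competitor `y₀` gives
`u_ε(x₀ + ξ) ≤ u_ε(x₀) - ⟪y₀ - x₀, ξ⟫ / ε + ‖ξ‖² / (2ε)`, while the subjet gives
`u_ε(x₀ + ξ) ≥ u_ε(x₀) + ⟪ζ, ξ⟫ + O(‖ξ‖²)`. Hence the linear form `⟪ζ + (y₀ - x₀) / ε, ·⟫` is
bounded above by `o(‖ξ‖)`, and testing it in the direction of its own vector shows it vanishes.
-/

section InnerProductSpace

variable {E : Type*} [NormedAddCommGroup E] [InnerProductSpace ℝ E]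

theorem eq_zero_of_inner_le_isLittleO {w : E} {g : E → ℝ} (hg : g =o[𝓝 0] fun ξ => ‖ξ‖)
    (hle : ∀ᶠ ξ in 𝓝 0, ⟪w, ξ⟫ ≤ g ξ) : w = 0 := by
  by_contra hw
  have hw_pos : 0 < ‖w‖ := norm_pos_iff.mpr hw
  have hray : Tendsto (fun t : ℝ => t • w) (𝓝[>] 0) (𝓝 0) :=
    ((continuous_id.smul continuous_const).tendsto' 0 0 (zero_smul ℝ w)).mono_left
      nhdsWithin_le_nhds
  obtain ⟨t, ht : 0 < t, hlin, hsmall⟩ := (eventually_mem_nhdsWithin.and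
    (hray.eventually (hle.and (hg.bound (half_pos hw_pos))))).exists
  have hinner : ⟪w, t • w⟫ = t * ‖w‖ ^ 2 := by
    rw [real_inner_smul_right, real_inner_self_eq_norm_sq]
  have hnorm : ‖‖t • w‖‖ = t * ‖w‖ := by
    rw [norm_norm, norm_smul, Real.norm_of_nonneg ht.le]
  have hray_bound : t * ‖w‖ ^ 2 ≤ ‖w‖ / 2 * (t * ‖w‖) := by
    rw [← hinner, ← hnorm]
    exact hlin.trans ((le_abs_self _).trans hsmall)
  nlinarith [mul_pos ht hw_pos]

theorem sInf_le_of_isCompact {X : Type*} [TopologicalSpace X] {S : Set X} (hS : IsCompact S)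
    {f : X → ℝ} (hf : ContinuousOn f S) {y : X} (hy : y ∈ S) : sInf {v : ℝ | ∃ z ∈ S, v = f z} ≤ f y := by
  have hset : {v : ℝ | ∃ z ∈ S, v = f z} = f '' S := by
    ext v
    simp only [Set.mem_ofPred_eq, Set.mem_image, eq_comm]
  rw [hset]
  exact csInf_le (hS.bddBelow_image hf) (Set.mem_image_of_mem f hy)

theorem norm_sub_add_sq_div {ε : ℝ} (hε : ε ≠ 0) (x y ξ : E) :
    ‖y - (x + ξ)‖ ^ 2 / (2 * ε) = ‖y - x‖ ^ 2 / (2 * ε) - ε⁻¹ * ⟪y - x, ξ⟫ + ‖ξ‖ ^ 2 / (2 * ε) := by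
  rw [show y - (x + ξ) = (y - x) - ξ by abel, norm_sub_sq_real]
  field_simp

theorem isBigO_inner_apply_self (A : E →L[ℝ] E) :
    (fun ξ => ⟪ξ, A ξ⟫) =O[𝓝 0] fun ξ => ‖ξ‖ ^ 2 :=
  IsBigO.of_bound ‖A‖ <| Eventually.of_forall fun ξ => by
    calc ‖⟪ξ, A ξ⟫‖ ≤ ‖ξ‖ * ‖A ξ‖ := norm_inner_le_norm _ _
      _ ≤ ‖ξ‖ * (‖A‖ * ‖ξ‖) := by gcongr; exact A.le_opNorm ξ
      _ = ‖A‖ * ‖‖ξ‖ ^ 2‖ := by rw [norm_pow, norm_norm]; ring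

end InnerProductSpace

theorem stmt_16_general {n : ℕ} (Ω : Set (EuclideanSpace ℝ (Fin n))) (hΩ : Bornology.IsBounded Ω)
    (u : EuclideanSpace ℝ (Fin n) → ℝ) (hu : ContinuousOn u (closure Ω))
    (ε : ℝ) (hε : 0 < ε)
    (uε : EuclideanSpace ℝ (Fin n) → ℝ)
    (huε : ∀ x, uε x = sInf {v : ℝ | ∃ y ∈ closure Ω, v = u y + ‖y - x‖ ^ 2 / (2 * ε)})
    (x₀ : EuclideanSpace ℝ (Fin n))
    (ζ : EuclideanSpace ℝ (Fin n))
    (A : EuclideanSpace ℝ (Fin n) →L[ℝ] EuclideanSpace ℝ (Fin n))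
    -- (ζ, A) ∈ J^{2,−} u_ε (x₀):
    (hsub : (fun ξ => max 0 (uε x₀ + ⟪ζ, ξ⟫ + (1 / 2) * ⟪ξ, A ξ⟫ - uε (x₀ + ξ)))
      =o[nhds 0] fun ξ => ‖ξ‖ ^ 2)
    (y₀ : EuclideanSpace ℝ (Fin n)) (hy₀ : y₀ ∈ closure Ω)
    -- y₀ attains the infimum defining u_ε(x₀):
    (hattain : uε x₀ = u y₀ + ‖y₀ - x₀‖ ^ 2 / (2 * ε)) :
    y₀ = x₀ - ε • ζ := by
  have hupper (ξ) : uε (x₀ + ξ) ≤ u y₀ + ‖y₀ - (x₀ + ξ)‖ ^ 2 / (2 * ε) := by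
    rw [huε]
    exact sInf_le_of_isCompact hΩ.isCompact_closure (hu.add
      (((continuous_id.sub continuous_const).norm.pow 2).div_const _).continuousOn) hy₀
  have hquad : (fun ξ : EuclideanSpace ℝ (Fin n) => (2 * ε)⁻¹ * ‖ξ‖ ^ 2 - 1 / 2 * ⟪ξ, A ξ⟫)
      =O[𝓝 0] fun ξ => ‖ξ‖ ^ 2 :=
    ((isBigO_refl _ _).const_mul_left _).sub ((isBigO_inner_apply_self A).const_mul_left _)
  have hw : ζ + ε⁻¹ • (y₀ - x₀) = 0 := by
    refine eq_zero_of_inner_le_isLittleO ((hsub.isBigO.add hquad).trans_isLittleO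
      (isLittleO_norm_pow_id one_lt_two).norm_right) (Eventually.of_forall fun ξ => ?_)
    have hcompetitor := hupper ξ
    rw [norm_sub_add_sq_div hε.ne'] at hcompetitor
    rw [inner_add_left, real_inner_smul_left]
    linarith [div_eq_inv_mul (‖ξ‖ ^ 2) (2 * ε),
      le_max_right 0 (uε x₀ + ⟪ζ, ξ⟫ + 1 / 2 * ⟪ξ, A ξ⟫ - uε (x₀ + ξ))]
  have hdiff : y₀ - (x₀ - ε • ζ) = ε • (ζ + ε⁻¹ • (y₀ - x₀)) := by
    rw [smul_add, smul_inv_smul₀ hε.ne']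
    abel
  rwa [hw, smul_zero, sub_eq_zero] at hdiff

theorem stmt_16 {n : ℕ} (Ω : Set (EuclideanSpace ℝ (Fin n))) (hΩ : Bornology.IsBounded Ω)
    (u : EuclideanSpace ℝ (Fin n) → ℝ) (hu : ContinuousOn u (closure Ω))
    (ε : ℝ) (hε : 0 < ε)
    (uε : EuclideanSpace ℝ (Fin n) → ℝ)
    (huε : ∀ x, uε x = sInf {v : ℝ | ∃ y ∈ closure Ω, v = u y + ‖y - x‖ ^ 2 / (2 * ε)})
    (x₀ : EuclideanSpace ℝ (Fin n)) (hx₀ : x₀ ∈ interior Ω)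
    (ζ : EuclideanSpace ℝ (Fin n))
    (A : EuclideanSpace ℝ (Fin n) →L[ℝ] EuclideanSpace ℝ (Fin n))
    (hAsymm : ∀ v w, ⟪A v, w⟫ = ⟪v, A w⟫)
    -- (ζ, A) ∈ J^{2,−} u_ε (x₀):
    (hsub : (fun ξ => max 0 (uε x₀ + ⟪ζ, ξ⟫ + (1 / 2) * ⟪ξ, A ξ⟫ - uε (x₀ + ξ)))
      =o[nhds 0] fun ξ => ‖ξ‖ ^ 2)
    (y₀ : EuclideanSpace ℝ (Fin n)) (hy₀ : y₀ ∈ closure Ω)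
    -- y₀ attains the infimum defining u_ε(x₀):
    (hattain : uε x₀ = u y₀ + ‖y₀ - x₀‖ ^ 2 / (2 * ε)) :
    y₀ = x₀ - ε • ζ :=
  stmt_16_general Ω hΩ u hu ε hε uε huε x₀ ζ A hsub y₀ hy₀ hattain
end

section
/- Let Ω ⊆ ℝⁿ be bounded, u continuous on closure(Ω)×[T₀,T₂], u_ε the parabolic inf-convolution, and suppose (p, ζ, A) ∈ P^{2,−}u_ε(x₀,t₀) for an interior point (x₀,t₀) of Ω×(T₀,T₂], and that (y₀,s₀) attains the infimum defining u_ε(x₀,t₀). Then y₀ = x₀ − εζ and s₀ ≥ t₀ − εp. -/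
open Set Asymptotics RealInnerProductSpace Filter Topology

/-!
Since `(y₀, s₀)` is admissible in the infimum defining `u_ε` at every point, `u_ε` lies below
the paraboloid `(x, t) ↦ u(y₀, s₀) + (‖y₀ - x‖² + |s₀ - t|²) / (2ε)`, which touches it at
`(x₀, t₀)`. Subtracting, the subjet inequality at `(x₀, t₀)` leaves the linear form
`(ξ, σ) ↦ ⟪ζ + (y₀ - x₀)/ε, ξ⟫ + σ (p + (s₀ - t₀)/ε)` bounded above by `O(‖ξ‖² + σ²) + o(‖ξ‖² + |σ|)`
on the half-space `σ ≤ 0`. Testing along rays, its spatial part vanishes and its time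
coefficient is nonnegative.
-/

lemma nonpos_of_le_isLittleO {f : ℝ → ℝ} {a b : ℝ} (hf : f =o[𝓝[>] 0] fun t => t)
    (h : ∀ᶠ t in 𝓝[>] 0, a * t - b * t ^ 2 ≤ f t) : a ≤ 0 := by
  have hlim : Tendsto (fun t => a - b * t) (𝓝[>] 0) (𝓝 a) := by
    have : Continuous fun t : ℝ => a - b * t := by fun_prop
    simpa using (this.tendsto 0).mono_left nhdsWithin_le_nhds
  refine le_of_tendsto_of_tendsto hlim hf.tendsto_div_nhds_zero ?_
  filter_upwards [h, self_mem_nhdsWithin] with t ht (htpos : 0 < t)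
  rw [le_div_iff₀ htpos]
  linarith

lemma isLittleO_comp_ray {E : Type*} [NormedAddCommGroup E] [NormedSpace ℝ E] {F : E × ℝ → ℝ}
    (hF : F =o[𝓝[{q | q.2 ≤ 0}] 0] fun q => ‖q.1‖ ^ 2 + |q.2|) (v : E) {τ : ℝ} (hτ : τ ≤ 0) :
    (fun t : ℝ => F (t • v, t * τ)) =o[𝓝[>] 0] fun t => t := by
  have hray : Tendsto (fun t : ℝ => (t • v, t * τ)) (𝓝[>] 0) (𝓝[{q | q.2 ≤ 0}] 0) := by
    refine tendsto_nhdsWithin_iff.mpr ⟨?_, ?_⟩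
    · have : Continuous fun t : ℝ => (t • v, t * τ) := by fun_prop
      simpa [Prod.mk_zero_zero] using (this.tendsto 0).mono_left nhdsWithin_le_nhds
    · filter_upwards [self_mem_nhdsWithin] with t (ht : 0 < t)
      exact mul_nonpos_of_nonneg_of_nonpos ht.le hτ
  refine (hF.comp_tendsto hray).trans_isBigO (isBigO_iff.mpr ⟨‖v‖ ^ 2 + |τ|, ?_⟩)
  filter_upwards [Ioo_mem_nhdsGT (zero_lt_one' ℝ)] with t ⟨ht0, ht1⟩
  have hsq : t ^ 2 ≤ t := by nlinarith
  simp only [Function.comp_apply, norm_smul, abs_mul, Real.norm_eq_abs, abs_of_pos ht0]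
  rw [abs_of_nonneg (by positivity)]
  nlinarith [sq_nonneg ‖v‖, abs_nonneg τ]

lemma eq_zero_and_nonneg_of_isLittleO {E : Type*} [NormedAddCommGroup E] [InnerProductSpace ℝ E]
    {F : E × ℝ → ℝ} (hF : F =o[𝓝[{q | q.2 ≤ 0}] 0] fun q => ‖q.1‖ ^ 2 + |q.2|)
    {c : E} {d K : ℝ} (hlow : ∀ ξ σ, ⟪c, ξ⟫ + σ * d - K * (‖ξ‖ ^ 2 + σ ^ 2) ≤ F (ξ, σ)) :
    c = 0 ∧ 0 ≤ d := by
  have hray : ∀ (v : E) (τ : ℝ), τ ≤ 0 → ⟪c, v⟫ + τ * d ≤ 0 := by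
    intro v τ hτ
    refine nonpos_of_le_isLittleO (b := K * (‖v‖ ^ 2 + τ ^ 2)) (isLittleO_comp_ray hF v hτ)
      (Eventually.of_forall fun t => ?_)
    calc (⟪c, v⟫ + τ * d) * t - K * (‖v‖ ^ 2 + τ ^ 2) * t ^ 2
        = ⟪c, t • v⟫ + t * τ * d - K * (‖t • v‖ ^ 2 + (t * τ) ^ 2) := by
          rw [real_inner_smul_right, norm_smul, Real.norm_eq_abs, mul_pow, sq_abs]; ring
      _ ≤ F (t • v, t * τ) := hlow _ _
  refine ⟨?_, ?_⟩
  · have h := hray c 0 le_rfl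
    rw [real_inner_self_eq_norm_sq, zero_mul, add_zero] at h
    exact norm_eq_zero.mp (pow_eq_zero_iff two_ne_zero |>.mp (le_antisymm h (by positivity)))
  · have h := hray 0 (-1) (by norm_num)
    rw [inner_zero_right] at h
    linarith

lemma penalty_sub_penalty {E : Type*} [NormedAddCommGroup E] [InnerProductSpace ℝ E]
    (ε : ℝ) (z ξ : E) (r σ : ℝ) :
    1 / (2 * ε) * (‖z‖ ^ 2 + |r| ^ 2) - 1 / (2 * ε) * (‖z - ξ‖ ^ 2 + |r - σ| ^ 2)
      = ε⁻¹ * (⟪z, ξ⟫ + r * σ) - 1 / (2 * ε) * (‖ξ‖ ^ 2 + σ ^ 2) := by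
  rw [norm_sub_sq_real, sq_abs, sq_abs]
  ring

theorem stmt_17_general {n : ℕ} (Ω : Set (EuclideanSpace ℝ (Fin n))) (hΩ : Bornology.IsBounded Ω)
    (T₀ T₂ : ℝ)
    (u : EuclideanSpace ℝ (Fin n) → ℝ → ℝ)
    (hu : ContinuousOn (fun p : EuclideanSpace ℝ (Fin n) × ℝ => u p.1 p.2)
      (closure Ω ×ˢ Icc T₀ T₂))
    (ε : ℝ) (hε : 0 < ε)
    (uε : EuclideanSpace ℝ (Fin n) → ℝ → ℝ)
    (huε : ∀ x₀ t₀, uε x₀ t₀ =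
      sInf {v : ℝ | ∃ y ∈ closure Ω, ∃ s ∈ Icc T₀ T₂,
        v = u y s + (1 / (2 * ε)) * (‖y - x₀‖ ^ 2 + |s - t₀| ^ 2)})
    (x₀ : EuclideanSpace ℝ (Fin n)) (t₀ : ℝ)
    (p : ℝ) (ζ : EuclideanSpace ℝ (Fin n))
    (A : EuclideanSpace ℝ (Fin n) →L[ℝ] EuclideanSpace ℝ (Fin n))
    -- (p, ζ, A) ∈ P^{2,−} u_ε (x₀, t₀):
    (hsub : (fun q : EuclideanSpace ℝ (Fin n) × ℝ =>
        max 0 (uε x₀ t₀ + ⟪ζ, q.1⟫ + q.2 * p + (1 / 2) * ⟪q.1, A q.1⟫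
          - uε (x₀ + q.1) (t₀ + q.2)))
      =o[𝓝[{q : EuclideanSpace ℝ (Fin n) × ℝ | q.2 ≤ 0}] 0]
        fun q => ‖q.1‖ ^ 2 + |q.2|)
    (y₀ : EuclideanSpace ℝ (Fin n)) (s₀ : ℝ)
    (hy₀ : y₀ ∈ closure Ω) (hs₀ : s₀ ∈ Icc T₀ T₂)
    -- (y₀, s₀) attains the infimum defining u_ε(x₀, t₀):
    (hattain : uε x₀ t₀ = u y₀ s₀ + (1 / (2 * ε)) * (‖y₀ - x₀‖ ^ 2 + |s₀ - t₀| ^ 2)) :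
    y₀ = x₀ - ε • ζ ∧ t₀ - ε * p ≤ s₀ := by
  obtain ⟨C, hC⟩ := (hΩ.isCompact_closure.prod isCompact_Icc).bddBelow_image hu
  have hle : ∀ ξ σ, uε (x₀ + ξ) (t₀ + σ) ≤
      u y₀ s₀ + 1 / (2 * ε) * (‖y₀ - (x₀ + ξ)‖ ^ 2 + |s₀ - (t₀ + σ)| ^ 2) := by
    intro ξ σ
    rw [huε]
    refine csInf_le ⟨C, ?_⟩ ⟨y₀, hy₀, s₀, hs₀, rfl⟩
    rintro v ⟨y, hy, s, hs, rfl⟩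
    have hCy : C ≤ u y s := hC ⟨(y, s), ⟨hy, hs⟩, rfl⟩
    have : 0 ≤ 1 / (2 * ε) * (‖y - (x₀ + ξ)‖ ^ 2 + |s - (t₀ + σ)| ^ 2) := by positivity
    linarith
  have hlow : ∀ ξ σ, ⟪ζ + ε⁻¹ • (y₀ - x₀), ξ⟫ + σ * (p + ε⁻¹ * (s₀ - t₀))
      - (‖A‖ / 2 + 1 / (2 * ε)) * (‖ξ‖ ^ 2 + σ ^ 2) ≤
      max 0 (uε x₀ t₀ + ⟪ζ, ξ⟫ + σ * p + (1 / 2) * ⟪ξ, A ξ⟫ - uε (x₀ + ξ) (t₀ + σ)) := by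
    intro ξ σ
    refine le_max_of_le_right ?_
    have hA : -(‖A‖ * ‖ξ‖ ^ 2) ≤ ⟪ξ, A ξ⟫ := by
      have := (abs_real_inner_le_norm ξ (A ξ)).trans
        (mul_le_mul_of_nonneg_left (A.le_opNorm ξ) (norm_nonneg ξ))
      linarith [neg_abs_le ⟪ξ, A ξ⟫]
    have hpen := penalty_sub_penalty ε (y₀ - x₀) ξ (s₀ - t₀) σ
    rw [← sub_add_eq_sub_sub, ← sub_add_eq_sub_sub] at hpen
    rw [inner_add_left, real_inner_smul_left]
    linarith [hle ξ σ, mul_nonneg (norm_nonneg A) (sq_nonneg σ)]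
  obtain ⟨hc, hd⟩ := eq_zero_and_nonneg_of_isLittleO hsub hlow
  refine ⟨?_, ?_⟩
  · have h := congrArg (ε • ·) hc
    simp only [smul_add, smul_inv_smul₀ hε.ne', smul_zero] at h
    rw [eq_sub_iff_add_eq, add_comm, ← sub_eq_zero, ← h]
    abel
  · have := mul_nonneg hε.le hd
    rw [mul_add, mul_inv_cancel_left₀ hε.ne'] at this
    linarith

theorem stmt_17 {n : ℕ} (Ω : Set (EuclideanSpace ℝ (Fin n))) (hΩ : Bornology.IsBounded Ω)
    (T₀ T₂ : ℝ) (hT : T₀ < T₂)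
    (u : EuclideanSpace ℝ (Fin n) → ℝ → ℝ)
    (hu : ContinuousOn (fun p : EuclideanSpace ℝ (Fin n) × ℝ => u p.1 p.2)
      (closure Ω ×ˢ Icc T₀ T₂))
    (ε : ℝ) (hε : 0 < ε)
    (uε : EuclideanSpace ℝ (Fin n) → ℝ → ℝ)
    (huε : ∀ x₀ t₀, uε x₀ t₀ =
      sInf {v : ℝ | ∃ y ∈ closure Ω, ∃ s ∈ Icc T₀ T₂,
        v = u y s + (1 / (2 * ε)) * (‖y - x₀‖ ^ 2 + |s - t₀| ^ 2)})
    (x₀ : EuclideanSpace ℝ (Fin n)) (t₀ : ℝ)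
    (hx₀ : x₀ ∈ interior Ω) (ht₀ : t₀ ∈ Ioc T₀ T₂)
    (p : ℝ) (ζ : EuclideanSpace ℝ (Fin n))
    (A : EuclideanSpace ℝ (Fin n) →L[ℝ] EuclideanSpace ℝ (Fin n))
    (hAsymm : ∀ v w, ⟪A v, w⟫ = ⟪v, A w⟫)
    -- (p, ζ, A) ∈ P^{2,−} u_ε (x₀, t₀):
    (hsub : (fun q : EuclideanSpace ℝ (Fin n) × ℝ =>
        max 0 (uε x₀ t₀ + ⟪ζ, q.1⟫ + q.2 * p + (1 / 2) * ⟪q.1, A q.1⟫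
          - uε (x₀ + q.1) (t₀ + q.2)))
      =o[𝓝[{q : EuclideanSpace ℝ (Fin n) × ℝ | q.2 ≤ 0}] 0]
        fun q => ‖q.1‖ ^ 2 + |q.2|)
    (y₀ : EuclideanSpace ℝ (Fin n)) (s₀ : ℝ)
    (hy₀ : y₀ ∈ closure Ω) (hs₀ : s₀ ∈ Icc T₀ T₂)
    -- (y₀, s₀) attains the infimum defining u_ε(x₀, t₀):
    (hattain : uε x₀ t₀ = u y₀ s₀ + (1 / (2 * ε)) * (‖y₀ - x₀‖ ^ 2 + |s₀ - t₀| ^ 2)) :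
    y₀ = x₀ - ε • ζ ∧ t₀ - ε * p ≤ s₀ :=
  stmt_17_general Ω hΩ T₀ T₂ u hu ε hε uε huε x₀ t₀ p ζ A hsub y₀ s₀ hy₀ hs₀ hattain
end
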